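/- Let Y, B be real N×N matrices, J the matrix deleting the first row, v ∈ C^N a unit null vector of J(Y + iB), and w ∈ R^N the unit null vector of JB (assuming λ_1(B) > 0). Then 1 − |w^* v|^2 ≥ ‖JYw‖^2 / (‖JYw‖^2 + ‖J(Y + iB)‖^2), and hence inf_{θ∈[0,2π]} ‖Re(e^{iθ}v)‖^2 ≥ (1/5) · λ_1(B)^2 · ‖JYw‖^2 / (‖JY‖ + ‖B‖)^4. -/

import Mathlib

/-!
Write `A = J(Y + iB)` and let `u` be a unit null vector of `A`. Since `JBw = 0`, the component
`r = u - ⟪w, u⟫ w` of `u` orthogonal to `w` satisfies `A r = -⟪w, u⟫ JYw`, so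
`|⟪w, u⟫| ‖JYw‖ ≤ ‖A‖ ‖r‖` with `‖r‖² = 1 - |⟪w, u⟫|²`; this is the first inequality.

For the second, apply it to `u = e^{iθ} v = a + ib`. The real part of `A u = 0` reads `JYa = JBb`,
and `JB` is bounded below by `λ₁(B)` on `w^⊥`, so the component `b'` of `b` orthogonal to `w`
has `λ₁(B) ‖b'‖ ≤ ‖JY‖ ‖a‖`. As `1 - |⟪w, u⟫|² ≤ ‖a‖² + ‖b'‖²`, the first inequality bounds
`‖a‖²` from below, with `‖A‖ ≤ ‖JY‖ + ‖B‖` controlling the constants.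
-/

open Matrix

/-- Euclidean norm of a real vector. -/
noncomputable def rnorm {n : Type*} [Fintype n] (v : n → ℝ) : ℝ :=
  Real.sqrt (∑ i, v i ^ 2)

/-- Euclidean norm of a complex vector. -/
noncomputable def cnorm {n : Type*} [Fintype n] (v : n → ℂ) : ℝ :=
  Real.sqrt (∑ i, Complex.normSq (v i))

/-- Operator norm of a real matrix. -/
noncomputable def ropNorm {m n : Type*} [Fintype m] [Fintype n] (M : Matrix m n ℝ) : ℝ :=
  sSup {c | ∃ v : n → ℝ, rnorm v ≤ 1 ∧ c = rnorm (M.mulVec v)}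

/-- Operator norm of a complex matrix. -/
noncomputable def copNorm {m n : Type*} [Fintype m] [Fintype n] (M : Matrix m n ℂ) : ℝ :=
  sSup {c | ∃ v : n → ℂ, cnorm v ≤ 1 ∧ c = cnorm (M.mulVec v)}

/-- Smallest singular value of a real square matrix. -/
noncomputable def smin {n : Type*} [Fintype n] (M : Matrix n n ℝ) : ℝ :=
  sInf {c | ∃ v : n → ℝ, rnorm v = 1 ∧ c = rnorm (M.mulVec v)}

/-- The `(N-1) × N` matrix deleting the first row. -/
def delRow (N : ℕ) (R : Type*) [Zero R] [One R] : Matrix (Fin (N - 1)) (Fin N) R :=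
  fun i j => if (j : ℕ) = (i : ℕ) + 1 then 1 else 0

open WithLp
open scoped Matrix.Norms.L2Operator InnerProductSpace

section VectorNorms

variable {n : Type*} [Fintype n]

lemma rnorm_nonneg (v : n → ℝ) : 0 ≤ rnorm v := Real.sqrt_nonneg _

lemma cnorm_nonneg (v : n → ℂ) : 0 ≤ cnorm v := Real.sqrt_nonneg _

lemma rnorm_zero : rnorm (0 : n → ℝ) = 0 := by simp [rnorm]

lemma rnorm_sq (v : n → ℝ) : rnorm v ^ 2 = ∑ i, v i ^ 2 :=
  Real.sq_sqrt (Finset.sum_nonneg fun _ _ => sq_nonneg _)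

lemma rnorm_eq_norm (v : n → ℝ) : rnorm v = ‖toLp 2 v‖ := by
  simp [rnorm, EuclideanSpace.norm_eq]

lemma cnorm_eq_norm (v : n → ℂ) : cnorm v = ‖toLp 2 v‖ := by
  simp [cnorm, EuclideanSpace.norm_eq, Complex.normSq_eq_norm_sq]

lemma rnorm_smul (c : ℝ) (v : n → ℝ) : rnorm (c • v) = |c| * rnorm v := by
  rw [rnorm_eq_norm, toLp_smul, norm_smul, ← rnorm_eq_norm, Real.norm_eq_abs]

lemma cnorm_ofReal (x : n → ℝ) : cnorm (fun i => (x i : ℂ)) = rnorm x := by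
  simp [cnorm, rnorm, Complex.normSq_ofReal, sq]

lemma cnorm_sq_eq_re_add_im (u : n → ℂ) :
    cnorm u ^ 2 = rnorm (fun i => (u i).re) ^ 2 + rnorm (fun i => (u i).im) ^ 2 := by
  rw [cnorm, Real.sq_sqrt (Finset.sum_nonneg fun i _ => Complex.normSq_nonneg _), rnorm_sq,
    rnorm_sq, ← Finset.sum_add_distrib]
  simp only [Complex.normSq_apply, sq]

lemma dotProduct_self_eq_rnorm_sq (w : n → ℝ) : w ⬝ᵥ w = rnorm w ^ 2 := by
  rw [rnorm_sq]
  simp only [dotProduct, sq]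

lemma rnorm_sub_smul_sq (x w : n → ℝ) (c : ℝ) :
    rnorm (x - c • w) ^ 2 = rnorm x ^ 2 - 2 * c * (w ⬝ᵥ x) + c ^ 2 * rnorm w ^ 2 := by
  simp only [rnorm_sq, dotProduct, Pi.sub_apply, Pi.smul_apply, smul_eq_mul, Finset.mul_sum,
    ← Finset.sum_sub_distrib, ← Finset.sum_add_distrib]
  exact Finset.sum_congr rfl fun i _ => by ring

lemma normSq_sum_ofReal_mul (w : n → ℝ) (u : n → ℂ) :
    Complex.normSq (∑ i, (w i : ℂ) * u i) =
      (w ⬝ᵥ fun i => (u i).re) ^ 2 + (w ⬝ᵥ fun i => (u i).im) ^ 2 := by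
  simp [Complex.normSq_apply, Complex.re_sum, Complex.im_sum, dotProduct, sq]

lemma one_sub_normSq_sum_ofReal_mul_le {w : n → ℝ} (hw : rnorm w = 1) {u : n → ℂ}
    (hu : cnorm u = 1) :
    1 - Complex.normSq (∑ i, (w i : ℂ) * u i) ≤ rnorm (fun i => (u i).re) ^ 2 +
      rnorm ((fun i => (u i).im) - (w ⬝ᵥ fun i => (u i).im) • w) ^ 2 := by
  have h := cnorm_sq_eq_re_add_im u
  rw [hu] at h
  rw [normSq_sum_ofReal_mul, rnorm_sub_smul_sq, hw]
  nlinarith [sq_nonneg (w ⬝ᵥ fun i => (u i).re)]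

end VectorNorms

section OperatorNorms

variable {m n : Type*} [Fintype m] [Fintype n] [DecidableEq n]

lemma ropNorm_eq_l2_opNorm (M : Matrix m n ℝ) : ropNorm M = ‖M‖ := by
  rw [l2_opNorm_def, ← ContinuousLinearMap.sSup_unitClosedBall_eq_norm]
  refine congrArg sSup (Set.ext fun c => ?_)
  simp only [Set.mem_ofPred_eq, Set.mem_image, Metric.mem_closedBall, dist_zero_right]
  constructor
  · rintro ⟨v, hv, rfl⟩
    exact ⟨toLp 2 v, by rwa [← rnorm_eq_norm], by rw [rnorm_eq_norm]; rfl⟩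
  · rintro ⟨x, hx, rfl⟩
    exact ⟨ofLp x, by rwa [rnorm_eq_norm], by rw [rnorm_eq_norm]; rfl⟩

lemma copNorm_eq_l2_opNorm (M : Matrix m n ℂ) : copNorm M = ‖M‖ := by
  rw [l2_opNorm_def, ← ContinuousLinearMap.sSup_unitClosedBall_eq_norm]
  refine congrArg sSup (Set.ext fun c => ?_)
  simp only [Set.mem_ofPred_eq, Set.mem_image, Metric.mem_closedBall, dist_zero_right]
  constructor
  · rintro ⟨v, hv, rfl⟩
    exact ⟨toLp 2 v, by rwa [← cnorm_eq_norm], by rw [cnorm_eq_norm]; rfl⟩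
  · rintro ⟨x, hx, rfl⟩
    exact ⟨ofLp x, by rwa [cnorm_eq_norm], by rw [cnorm_eq_norm]; rfl⟩

lemma rnorm_mulVec_le (M : Matrix m n ℝ) (x : n → ℝ) : rnorm (M *ᵥ x) ≤ ‖M‖ * rnorm x := by
  rw [rnorm_eq_norm, rnorm_eq_norm]
  exact M.l2_opNorm_mulVec (toLp 2 x)

lemma l2_opNorm_le_of_rnorm_mulVec_le (M : Matrix m n ℝ) {C : ℝ} (hC : 0 ≤ C)
    (h : ∀ x, rnorm (M *ᵥ x) ≤ C * rnorm x) : ‖M‖ ≤ C :=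
  ContinuousLinearMap.opNorm_le_bound _ hC fun x => by
    have hx := h (ofLp x)
    rwa [rnorm_eq_norm, rnorm_eq_norm, toLp_ofLp] at hx

lemma l2_opNorm_le_of_cnorm_mulVec_le (M : Matrix m n ℂ) {C : ℝ} (hC : 0 ≤ C)
    (h : ∀ x, cnorm (M *ᵥ x) ≤ C * cnorm x) : ‖M‖ ≤ C :=
  ContinuousLinearMap.opNorm_le_bound _ hC fun x => by
    have hx := h (ofLp x)
    rwa [cnorm_eq_norm, cnorm_eq_norm, toLp_ofLp] at hx

end OperatorNorms

section SmallestSingularValue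

variable {n : Type*} [Fintype n]

lemma smin_nonneg (M : Matrix n n ℝ) : 0 ≤ smin M :=
  Real.sInf_nonneg (by rintro _ ⟨v, -, rfl⟩; exact rnorm_nonneg _)

lemma smin_le_rnorm_mulVec (M : Matrix n n ℝ) {v : n → ℝ} (hv : rnorm v = 1) :
    smin M ≤ rnorm (M *ᵥ v) :=
  csInf_le ⟨0, by rintro _ ⟨v, -, rfl⟩; exact rnorm_nonneg _⟩ ⟨v, hv, rfl⟩

lemma smin_mul_rnorm_le (M : Matrix n n ℝ) (v : n → ℝ) : smin M * rnorm v ≤ rnorm (M *ᵥ v) := by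
  rcases (rnorm_nonneg v).eq_or_lt with hv | hv
  · rw [← hv, mul_zero]
    exact rnorm_nonneg _
  · have hunit : rnorm ((rnorm v)⁻¹ • v) = 1 := by
      rw [rnorm_smul, abs_of_pos (inv_pos.2 hv), inv_mul_cancel₀ hv.ne']
    have h := smin_le_rnorm_mulVec M hunit
    rwa [mulVec_smul, rnorm_smul, abs_of_pos (inv_pos.2 hv), ← div_eq_inv_mul,
      le_div_iff₀ hv] at h

lemma smin_le_l2_opNorm [DecidableEq n] (M : Matrix n n ℝ) {v : n → ℝ} (hv : rnorm v = 1) :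
    smin M ≤ ‖M‖ :=
  (smin_le_rnorm_mulVec M hv).trans <| by simpa [hv] using rnorm_mulVec_le M v

end SmallestSingularValue

section DeleteFirstRow

lemma delRow_mulVec_apply {R : Type*} [NonAssocSemiring R] (N : ℕ) (y : Fin N → R)
    (i : Fin (N - 1)) : (delRow N R *ᵥ y) i = y ⟨i + 1, by omega⟩ := by
  have hj : ∀ j : Fin N, (j : ℕ) = i + 1 ↔ j = ⟨i + 1, by omega⟩ := fun j => by rw [Fin.ext_iff]
  simp [mulVec, dotProduct, delRow, hj]

lemma rnorm_delRow_mulVec_sq_add_sq (n : ℕ) (y : Fin (n + 1) → ℝ) :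
    rnorm (delRow (n + 1) ℝ *ᵥ y) ^ 2 + y 0 ^ 2 = rnorm y ^ 2 := by
  rw [rnorm_sq, rnorm_sq, Fin.sum_univ_succ, add_comm]
  simp only [delRow_mulVec_apply]
  rfl

lemma l2_opNorm_delRow_mul_le {n : ℕ} {o : Type*} [Fintype o] [DecidableEq o]
    (B : Matrix (Fin (n + 1)) o ℝ) : ‖delRow (n + 1) ℝ * B‖ ≤ ‖B‖ :=
  l2_opNorm_le_of_rnorm_mulVec_le _ (norm_nonneg _) fun x => by
    rw [← mulVec_mulVec]
    refine le_trans ?_ (rnorm_mulVec_le B x)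
    have h := rnorm_delRow_mulVec_sq_add_sq n (B *ᵥ x)
    nlinarith [rnorm_nonneg (delRow (n + 1) ℝ *ᵥ (B *ᵥ x)), rnorm_nonneg (B *ᵥ x)]

lemma delRow_map_ofReal (N : ℕ) : (delRow N ℝ).map (fun x => (x : ℂ)) = delRow N ℂ := by
  ext i j
  simp [delRow, apply_ite]

/-- Subtracting from `x` the multiple of `w` that kills `(B x) 0` leaves `J B x` unchanged and can
only lengthen `x`, since `x ⊥ w`. No such multiple exists only if `B w = 0`, i.e. `λ₁(B) = 0`. -/
theorem smin_mul_rnorm_le_of_dotProduct_eq_zero {n : ℕ} (B : Matrix (Fin (n + 1)) (Fin (n + 1)) ℝ)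
    {w x : Fin (n + 1) → ℝ} (hw : rnorm w = 1) (hBw : (delRow (n + 1) ℝ * B) *ᵥ w = 0)
    (hx : w ⬝ᵥ x = 0) : smin B * rnorm x ≤ rnorm ((delRow (n + 1) ℝ * B) *ᵥ x) := by
  rw [← mulVec_mulVec] at hBw ⊢
  by_cases h0 : (B *ᵥ w) 0 = 0
  · have hsmin : smin B ≤ 0 := by
      have h := rnorm_delRow_mulVec_sq_add_sq n (B *ᵥ w)
      rw [hBw, h0, rnorm_zero] at h
      have h' := smin_le_rnorm_mulVec B hw
      nlinarith [rnorm_nonneg (B *ᵥ w)]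
    nlinarith [rnorm_nonneg x, rnorm_nonneg (delRow (n + 1) ℝ *ᵥ (B *ᵥ x))]
  · set z := x - ((B *ᵥ x) 0 / (B *ᵥ w) 0) • w with hz
    have hBz : delRow (n + 1) ℝ *ᵥ (B *ᵥ z) = delRow (n + 1) ℝ *ᵥ (B *ᵥ x) := by
      rw [hz, mulVec_sub, mulVec_smul, mulVec_sub, mulVec_smul, hBw, smul_zero, sub_zero]
    have hBz0 : (B *ᵥ z) 0 = 0 := by
      rw [hz, mulVec_sub, mulVec_smul, Pi.sub_apply, Pi.smul_apply, smul_eq_mul,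
        div_mul_cancel₀ _ h0, sub_self]
    have hxz : rnorm x ≤ rnorm z := by
      have h := rnorm_sub_smul_sq x w ((B *ᵥ x) 0 / (B *ᵥ w) 0)
      rw [hx, hw, ← hz] at h
      nlinarith [rnorm_nonneg x, rnorm_nonneg z]
    have hnorm : rnorm (B *ᵥ z) = rnorm (delRow (n + 1) ℝ *ᵥ (B *ᵥ x)) := by
      have h := rnorm_delRow_mulVec_sq_add_sq n (B *ᵥ z)
      rw [hBz, hBz0] at h
      nlinarith [rnorm_nonneg (B *ᵥ z), rnorm_nonneg (delRow (n + 1) ℝ *ᵥ (B *ᵥ x))]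
    calc smin B * rnorm x ≤ smin B * rnorm z := mul_le_mul_of_nonneg_left hxz (smin_nonneg B)
      _ ≤ rnorm (B *ᵥ z) := smin_mul_rnorm_le B z
      _ = _ := hnorm

end DeleteFirstRow

noncomputable def Matrix.ofReIm {m n : Type*} (P Q : Matrix m n ℝ) : Matrix m n ℂ :=
  P.map (fun x => (x : ℂ)) + Complex.I • Q.map (fun x => (x : ℂ))

section ReIm

variable {m n : Type*} [Fintype n]

lemma re_map_ofReal_mulVec (P : Matrix m n ℝ) (u : n → ℂ) (i : m) :
    ((P.map (fun x => (x : ℂ)) *ᵥ u) i).re = (P *ᵥ fun j => (u j).re) i := by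
  simp [mulVec, dotProduct, Complex.re_sum]

lemma im_map_ofReal_mulVec (P : Matrix m n ℝ) (u : n → ℂ) (i : m) :
    ((P.map (fun x => (x : ℂ)) *ᵥ u) i).im = (P *ᵥ fun j => (u j).im) i := by
  simp [mulVec, dotProduct, Complex.im_sum]

lemma map_ofReal_mulVec_ofReal (P : Matrix m n ℝ) (x : n → ℝ) :
    (P.map (fun x => (x : ℂ)) *ᵥ fun i => (x i : ℂ)) = fun i => ((P *ᵥ x) i : ℂ) :=
  funext fun i => (RingHom.map_mulVec Complex.ofRealHom P x i).symm

lemma re_ofReIm_mulVec (P Q : Matrix m n ℝ) (u : n → ℂ) :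
    (fun i => ((ofReIm P Q *ᵥ u) i).re) =
      P *ᵥ (fun j => (u j).re) - Q *ᵥ (fun j => (u j).im) := by
  ext i
  simp [ofReIm, add_mulVec, smul_mulVec, re_map_ofReal_mulVec, im_map_ofReal_mulVec,
    sub_eq_add_neg]

lemma ofReIm_mulVec_ofReal (P Q : Matrix m n ℝ) (x : n → ℝ) :
    ofReIm P Q *ᵥ (fun i => (x i : ℂ)) =
      fun i => ((P *ᵥ x) i : ℂ) + Complex.I * ((Q *ᵥ x) i : ℂ) := by
  ext i
  simp [ofReIm, add_mulVec, smul_mulVec, map_ofReal_mulVec_ofReal]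

variable [Fintype m] [DecidableEq n]

lemma l2_opNorm_map_ofReal_le (P : Matrix m n ℝ) : ‖P.map (fun x => (x : ℂ))‖ ≤ ‖P‖ :=
  l2_opNorm_le_of_cnorm_mulVec_le _ (norm_nonneg _) fun u => by
    have hre := pow_le_pow_left₀ (rnorm_nonneg _) (rnorm_mulVec_le P fun j => (u j).re) 2
    have him := pow_le_pow_left₀ (rnorm_nonneg _) (rnorm_mulVec_le P fun j => (u j).im) 2
    have hsq : cnorm (P.map (fun x => (x : ℂ)) *ᵥ u) ^ 2 ≤ (‖P‖ * cnorm u) ^ 2 := by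
      simp only [cnorm_sq_eq_re_add_im, re_map_ofReal_mulVec, im_map_ofReal_mulVec, mul_pow]
        at hre him ⊢
      linarith
    exact (pow_le_pow_iff_left₀ (cnorm_nonneg _) (by positivity [cnorm_nonneg u]) two_ne_zero).1 hsq

lemma l2_opNorm_ofReIm_le (P Q : Matrix m n ℝ) : ‖ofReIm P Q‖ ≤ ‖P‖ + ‖Q‖ := by
  calc ‖ofReIm P Q‖ ≤ ‖P.map (fun x => (x : ℂ))‖ + ‖Complex.I • Q.map (fun x => (x : ℂ))‖ :=
        norm_add_le _ _
    _ ≤ ‖P‖ + ‖Q‖ := by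
        rw [norm_smul, Complex.norm_I, one_mul]
        exact add_le_add (l2_opNorm_map_ofReal_le P) (l2_opNorm_map_ofReal_le Q)

end ReIm

lemma delRow_mul_ofReIm {N : ℕ} (Y B : Matrix (Fin N) (Fin N) ℝ) :
    delRow N ℂ * ofReIm Y B = ofReIm (delRow N ℝ * Y) (delRow N ℝ * B) := by
  have hmap (M : Matrix (Fin N) (Fin N) ℝ) : (delRow N ℝ).map (fun x => (x : ℂ)) *
      M.map (fun x => (x : ℂ)) = (delRow N ℝ * M).map (fun x => (x : ℂ)) :=
    (Matrix.map_mul (f := Complex.ofRealHom)).symm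
  rw [ofReIm, ofReIm, Matrix.mul_add, Matrix.mul_smul, ← delRow_map_ofReal, hmap, hmap]

theorem norm_apply_sq_div_le_one_sub_norm_inner_sq {𝕜 E F : Type*} [RCLike 𝕜]
    [NormedAddCommGroup E] [InnerProductSpace 𝕜 E] [SeminormedAddCommGroup F] [NormedSpace 𝕜 F]
    (A : E →L[𝕜] F) {w u : E} (hw : ‖w‖ = 1) (hu : ‖u‖ = 1) (hAu : A u = 0) :
    ‖A w‖ ^ 2 / (‖A w‖ ^ 2 + ‖A‖ ^ 2) ≤ 1 - ‖⟪w, u⟫_𝕜‖ ^ 2 := by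
  set c := ⟪w, u⟫_𝕜
  have hr : ‖u - c • w‖ ^ 2 = 1 - ‖c‖ ^ 2 := by
    rw [@norm_sub_sq 𝕜, inner_smul_right, norm_smul, hu, hw, ← inner_conj_symm, RCLike.mul_conj]
    norm_cast
    ring
  have hAr : ‖c‖ * ‖A w‖ ≤ ‖A‖ * ‖u - c • w‖ := by
    simpa [hAu, norm_smul] using A.le_opNorm (u - c • w)
  have key : ‖c‖ ^ 2 * ‖A w‖ ^ 2 ≤ ‖A‖ ^ 2 * (1 - ‖c‖ ^ 2) := by
    rw [← hr, ← mul_pow, ← mul_pow]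
    exact pow_le_pow_left₀ (by positivity) hAr 2
  refine div_le_of_le_mul₀ (by positivity) (by rw [← hr]; positivity) ?_
  nlinarith [key]

section NullVectors

variable {m n : Type*} [Fintype m] [Fintype n] [DecidableEq n]

theorem rnorm_mulVec_sq_div_le_one_sub_normSq {P Q : Matrix m n ℝ} {w : n → ℝ}
    (hw : rnorm w = 1) (hQw : Q *ᵥ w = 0) {u : n → ℂ} (hu : cnorm u = 1)
    (hAu : ofReIm P Q *ᵥ u = 0) :
    rnorm (P *ᵥ w) ^ 2 / (rnorm (P *ᵥ w) ^ 2 + ‖ofReIm P Q‖ ^ 2) ≤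
      1 - Complex.normSq (∑ i, (w i : ℂ) * u i) := by
  have hAw : ofReIm P Q *ᵥ (fun i => (w i : ℂ)) = fun i => ((P *ᵥ w) i : ℂ) := by
    simp [ofReIm_mulVec_ofReal, hQw]
  have hinner : ⟪toLp 2 (fun i => (w i : ℂ)), toLp 2 u⟫_ℂ = ∑ i, (w i : ℂ) * u i := by
    simp [EuclideanSpace.inner_toLp_toLp, dotProduct, mul_comm]
  set A := (toEuclideanLin.trans LinearMap.toContinuousLinearMap) (ofReIm P Q)
  have hAW : A (toLp 2 fun i => (w i : ℂ)) = toLp 2 fun i => ((P *ᵥ w) i : ℂ) :=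
    congrArg (toLp 2) hAw
  have hAU : A (toLp 2 u) = 0 := by
    change toLp 2 (ofReIm P Q *ᵥ u) = 0
    rw [hAu, toLp_zero]
  have h := norm_apply_sq_div_le_one_sub_norm_inner_sq A
    (by rw [← cnorm_eq_norm, cnorm_ofReal, hw]) (by rw [← cnorm_eq_norm, hu]) hAU
  rwa [hAW, ← cnorm_eq_norm, cnorm_ofReal, ← l2_opNorm_def, hinner,
    ← Complex.normSq_eq_norm_sq] at h

theorem sq_mul_rnorm_mulVec_sq_le_mul_rnorm_re_sq {P Q : Matrix m n ℝ} {w : n → ℝ}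
    (hw : rnorm w = 1) (hQw : Q *ᵥ w = 0) {u : n → ℂ} (hu : cnorm u = 1)
    (hAu : ofReIm P Q *ᵥ u = 0) {s K : ℝ}
    (hs : 0 ≤ s) (hsK : s ≤ K) (hK : ‖P‖ + ‖Q‖ ≤ K)
    (hQ : ∀ x, w ⬝ᵥ x = 0 → s * rnorm x ≤ rnorm (Q *ᵥ x)) :
    s ^ 2 * rnorm (P *ᵥ w) ^ 2 ≤ 4 * K ^ 4 * rnorm (fun i => (u i).re) ^ 2 := by
  set a := fun i => (u i).re
  set b := fun i => (u i).im
  set b' := b - (w ⬝ᵥ b) • w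
  have hb'w : w ⬝ᵥ b' = 0 := by
    rw [dotProduct_sub, dotProduct_smul, dotProduct_self_eq_rnorm_sq, hw, smul_eq_mul, one_pow,
      mul_one, sub_self]
  have hQb' : Q *ᵥ b' = P *ᵥ a := by
    have h := re_ofReIm_mulVec P Q u
    rw [hAu] at h
    rw [mulVec_sub, mulVec_smul, hQw, smul_zero, sub_zero, eq_comm, ← sub_eq_zero, ← h]
    rfl
  have hb' : s * rnorm b' ≤ ‖P‖ * rnorm a :=
    calc s * rnorm b' ≤ rnorm (Q *ᵥ b') := hQ b' hb'w
      _ = rnorm (P *ᵥ a) := by rw [hQb']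
      _ ≤ ‖P‖ * rnorm a := rnorm_mulVec_le P a
  have hPw : rnorm (P *ᵥ w) ≤ K := by
    have := rnorm_mulVec_le P w
    rw [hw, mul_one] at this
    linarith [norm_nonneg Q]
  have hA : ‖ofReIm P Q‖ ≤ K := (l2_opNorm_ofReIm_le P Q).trans hK
  have hdiv := (rnorm_mulVec_sq_div_le_one_sub_normSq hw hQw hu hAu).trans
    (one_sub_normSq_sum_ofReal_mul_le hw hu)
  have ht : rnorm (P *ᵥ w) ^ 2 ≤ 2 * K ^ 2 * (rnorm a ^ 2 + rnorm b' ^ 2) := by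
    rcases (sq_nonneg (rnorm (P *ᵥ w))).eq_or_lt with h0 | hpos
    · rw [← h0]
      positivity
    · rw [div_le_iff₀ (by positivity)] at hdiv
      nlinarith [pow_le_pow_left₀ (rnorm_nonneg _) hPw 2, pow_le_pow_left₀ (norm_nonneg _) hA 2]
  have hb'K : (s * rnorm b') ^ 2 ≤ K ^ 2 * rnorm a ^ 2 := by
    rw [← mul_pow]
    exact pow_le_pow_left₀ (by positivity [rnorm_nonneg b'])
      (hb'.trans (mul_le_mul_of_nonneg_right (by linarith [norm_nonneg Q]) (rnorm_nonneg a))) 2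
  calc s ^ 2 * rnorm (P *ᵥ w) ^ 2 ≤ s ^ 2 * (2 * K ^ 2 * (rnorm a ^ 2 + rnorm b' ^ 2)) :=
        mul_le_mul_of_nonneg_left ht (sq_nonneg s)
    _ = 2 * K ^ 2 * (s ^ 2 * rnorm a ^ 2 + (s * rnorm b') ^ 2) := by ring
    _ ≤ 2 * K ^ 2 * (K ^ 2 * rnorm a ^ 2 + K ^ 2 * rnorm a ^ 2) := by gcongr
    _ = 4 * K ^ 4 * rnorm a ^ 2 := by ring

end NullVectors

theorem genuinely_complex_null_vector_general (N : ℕ)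
    (Y B : Matrix (Fin N) (Fin N) ℝ)
    (v : Fin N → ℂ) (hv : cnorm v = 1)
    (hnull : ((delRow N ℂ) *
        (Y.map (fun x => (x : ℂ)) + Complex.I • B.map (fun x => (x : ℂ)))).mulVec v = 0)
    (w : Fin N → ℝ) (hw : rnorm w = 1)
    (hwnull : ((delRow N ℝ) * B).mulVec w = 0) :
    rnorm (((delRow N ℝ) * Y).mulVec w) ^ 2 /
        (rnorm (((delRow N ℝ) * Y).mulVec w) ^ 2 +
          copNorm ((delRow N ℂ) *
            (Y.map (fun x => (x : ℂ)) + Complex.I • B.map (fun x => (x : ℂ)))) ^ 2)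
      ≤ 1 - Complex.normSq (∑ i, (w i : ℂ) * v i) ∧
    (1 / 5) * smin B ^ 2 * rnorm (((delRow N ℝ) * Y).mulVec w) ^ 2 /
        (ropNorm ((delRow N ℝ) * Y) + ropNorm B) ^ 4
      ≤ sInf ((fun θ : ℝ => ∑ i, (Complex.exp (θ * Complex.I) * v i).re ^ 2) ''
          Set.Icc 0 (2 * Real.pi)) := by
  obtain ⟨n, rfl⟩ : ∃ n, N = n + 1 := by
    cases N with
    | zero => simp [rnorm] at hw
    | succ n => exact ⟨n, rfl⟩
  change (delRow (n + 1) ℂ * ofReIm Y B) *ᵥ v = 0 at hnull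
  change _ / (_ + copNorm (delRow (n + 1) ℂ * ofReIm Y B) ^ 2) ≤ _ ∧ _
  rw [delRow_mul_ofReIm] at hnull ⊢
  rw [copNorm_eq_l2_opNorm, ropNorm_eq_l2_opNorm, ropNorm_eq_l2_opNorm]
  refine ⟨rnorm_mulVec_sq_div_le_one_sub_normSq hw hwnull hv hnull, ?_⟩
  refine le_csInf ((Set.nonempty_Icc.2 (by positivity)).image _) ?_
  rintro _ ⟨θ, -, rfl⟩
  let u := Complex.exp (θ * Complex.I) • v
  have hu : cnorm u = 1 := by
    rw [cnorm_eq_norm, toLp_smul, norm_smul, Complex.norm_exp_ofReal_mul_I, one_mul,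
      ← cnorm_eq_norm, hv]
  have hAu : ofReIm (delRow (n + 1) ℝ * Y) (delRow (n + 1) ℝ * B) *ᵥ u = 0 := by
    rw [mulVec_smul, hnull, smul_zero]
  have hbound := sq_mul_rnorm_mulVec_sq_le_mul_rnorm_re_sq hw hwnull hu hAu (smin_nonneg B)
    ((smin_le_l2_opNorm B hw).trans (le_add_of_nonneg_left (norm_nonneg _)))
    (add_le_add le_rfl (l2_opNorm_delRow_mul_le B))
    (fun x hx => smin_mul_rnorm_le_of_dotProduct_eq_zero B hw hwnull hx)
  have hre : ∑ i, (Complex.exp (θ * Complex.I) * v i).re ^ 2 = rnorm (fun i => (u i).re) ^ 2 :=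
    (rnorm_sq _).symm
  dsimp only
  rw [hre]
  refine div_le_of_le_mul₀ (by positivity) (sq_nonneg _) ?_
  nlinarith [sq_nonneg (rnorm fun i => (u i).re),
    pow_nonneg (add_nonneg (norm_nonneg (delRow (n + 1) ℝ * Y)) (norm_nonneg B)) 4]

/-- With `v` a unit null vector of `J(Y+iB)` and `w` the unit null vector of
`JB`: `1 - |w^*v|² ≥ ‖JYw‖²/(‖JYw‖² + ‖J(Y+iB)‖²)`, and hence
`inf_θ ‖Re(e^{iθ}v)‖² ≥ (1/5) λ₁(B)² ‖JYw‖² / (‖JY‖ + ‖B‖)⁴`. -/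
theorem genuinely_complex_null_vector (N : ℕ) (hN : 1 ≤ N)
    (Y B : Matrix (Fin N) (Fin N) ℝ)
    (v : Fin N → ℂ) (hv : cnorm v = 1)
    (hnull : ((delRow N ℂ) *
        (Y.map (fun x => (x : ℂ)) + Complex.I • B.map (fun x => (x : ℂ)))).mulVec v = 0)
    (w : Fin N → ℝ) (hw : rnorm w = 1)
    (hwnull : ((delRow N ℝ) * B).mulVec w = 0)
    (hB : 0 < smin B) :
    rnorm (((delRow N ℝ) * Y).mulVec w) ^ 2 /
        (rnorm (((delRow N ℝ) * Y).mulVec w) ^ 2 +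
          copNorm ((delRow N ℂ) *
            (Y.map (fun x => (x : ℂ)) + Complex.I • B.map (fun x => (x : ℂ)))) ^ 2)
      ≤ 1 - Complex.normSq (∑ i, (w i : ℂ) * v i) ∧
    (1 / 5) * smin B ^ 2 * rnorm (((delRow N ℝ) * Y).mulVec w) ^ 2 /
        (ropNorm ((delRow N ℝ) * Y) + ropNorm B) ^ 4
      ≤ sInf ((fun θ : ℝ => ∑ i, (Complex.exp (θ * Complex.I) * v i).re ^ 2) ''
          Set.Icc 0 (2 * Real.pi)) :=
  genuinely_complex_null_vector_general N Y B v hv hnull w hw hwnull
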